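/- For the semi-coupling formulation of WFR between discrete measures, splitting the masses as αᵢⱼ with Σⱼαᵢⱼ = μᵢ and βⱼᵢ with Σᵢβⱼᵢ = νⱼ, the total cost Σᵢⱼ WFR_η²(αᵢⱼδ_{xᵢ}, βⱼᵢδ_{yⱼ}) is always at least WFR_η²(μ, ν) defined via the KL-relaxed primal problem (Theorem 3.3), i.e., the semi-coupling value upper-bounds the KL-primal value. -/

import Mathlib

/-!
Take the plan `R i j = √(α i j * β j i) * cos₊(‖x i - y j‖ / (2η))`. For a single pair, the
KL-relaxed objective of the mass `√(ab)·c` against the masses `a`, `b` is exactly the Dirac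
formula `a + b - 2√(ab)·c`. The marginal terms of `R` are controlled by these entrywise terms
because `klR` is the perspective of the convex function `klFun`, hence subadditive, and
`μ i = ∑ j, α i j`, `ν j = ∑ i, β j i`.
-/

noncomputable def cosPlus (x : ℝ) : ℝ :=
  if x ∈ Set.Icc (-(Real.pi / 2)) (Real.pi / 2) then Real.cos x else 0

noncomputable def klR (r h : ℝ) : ℝ := r * Real.log (r / h) - r + h

noncomputable def wfrCost {n : ℕ} (η : ℝ) (x y : EuclideanSpace ℝ (Fin n)) : EReal :=
  if cosPlus (‖x - y‖ / (2 * η)) = 0 then ⊤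
  else ((-2 * Real.log (cosPlus (‖x - y‖ / (2 * η))) : ℝ) : EReal)

noncomputable def wfrSq {n I J : ℕ} (η : ℝ) (μ : Fin I → ℝ) (x : Fin I → EuclideanSpace ℝ (Fin n))
    (ν : Fin J → ℝ) (y : Fin J → EuclideanSpace ℝ (Fin n)) : EReal :=
  ((2 * η ^ 2 : ℝ) : EReal) *
    sInf {v : EReal | ∃ R : Fin I → Fin J → ℝ, (∀ i j, 0 ≤ R i j) ∧
      v = (∑ i, ∑ j, wfrCost η (x i) (y j) * ((R i j : ℝ) : EReal)) +
        ((∑ i, klR (∑ j, R i j) (μ i) + ∑ j, klR (∑ i, R i j) (ν j) : ℝ) : EReal)}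

/-- Squared WFR distance between two Diracs (explicit formula). -/
noncomputable def wfrDiracSq {n : ℕ} (η h₀ h₁ : ℝ) (x y : EuclideanSpace ℝ (Fin n)) : ℝ :=
  2 * η ^ 2 * (h₀ + h₁ - 2 * Real.sqrt (h₀ * h₁) * cosPlus (‖x - y‖ / (2 * η)))

open Finset InformationTheory

lemma cosPlus_nonneg (t : ℝ) : 0 ≤ cosPlus t := by
  unfold cosPlus
  split_ifs with ht
  · exact Real.cos_nonneg_of_mem_Icc ht
  · exact le_rfl

@[simp]
lemma klR_zero_left (h : ℝ) : klR 0 h = h := by simp [klR]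

lemma klR_eq_mul_klFun (r : ℝ) {h : ℝ} (hh : 0 < h) : klR r h = h * klFun (r / h) := by
  rw [klR, klFun_apply]
  field_simp
  ring

lemma klR_add_le {a b c d : ℝ} (ha : 0 ≤ a) (hb : 0 ≤ b) (hc : 0 ≤ c) (hd : 0 ≤ d)
    (hab : b = 0 → a = 0) (hcd : d = 0 → c = 0) :
    klR (a + c) (b + d) ≤ klR a b + klR c d := by
  rcases hb.eq_or_lt with rfl | hb
  · simp [hab rfl]
  rcases hd.eq_or_lt with rfl | hd
  · simp [hcd rfl]
  have hbd : 0 < b + d := by positivity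
  have hmix : (a + c) / (b + d) = (b / (b + d)) • (a / b) + (d / (b + d)) • (c / d) := by
    simp only [smul_eq_mul]
    field_simp
  have hjensen := convexOn_klFun.2 (Set.mem_Ici.2 (div_nonneg ha hb.le))
    (Set.mem_Ici.2 (div_nonneg hc hd.le)) (div_nonneg hb.le hbd.le) (div_nonneg hd.le hbd.le)
    (by field_simp)
  rw [← hmix, smul_eq_mul, smul_eq_mul] at hjensen
  rw [klR_eq_mul_klFun _ hbd, klR_eq_mul_klFun _ hb, klR_eq_mul_klFun _ hd]
  calc (b + d) * klFun ((a + c) / (b + d))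
      ≤ (b + d) * (b / (b + d) * klFun (a / b) + d / (b + d) * klFun (c / d)) :=
        mul_le_mul_of_nonneg_left hjensen hbd.le
    _ = b * klFun (a / b) + d * klFun (c / d) := by field_simp

lemma klR_sum_le {ι : Type*} (s : Finset ι) {r h : ι → ℝ} (hr : ∀ i ∈ s, 0 ≤ r i)
    (hh : ∀ i ∈ s, 0 ≤ h i) (hrh : ∀ i ∈ s, h i = 0 → r i = 0) :
    klR (∑ i ∈ s, r i) (∑ i ∈ s, h i) ≤ ∑ i ∈ s, klR (r i) (h i) := by
  let p : ℝ × ℝ → Prop := fun q => 0 ≤ q.1 ∧ 0 ≤ q.2 ∧ (q.2 = 0 → q.1 = 0)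
  have hp_add : ∀ q q', p q → p q' → p (q + q') := by
    rintro ⟨a, b⟩ ⟨c, d⟩ ⟨ha, hb, hab⟩ ⟨hc, hd, hcd⟩
    simp only [p, Prod.mk_add_mk] at *
    refine ⟨add_nonneg ha hc, add_nonneg hb hd, fun hbd => ?_⟩
    rw [hab (by linarith), hcd (by linarith), add_zero]
  have := le_sum_of_subadditive_on_pred (fun q : ℝ × ℝ => klR q.1 q.2) p (by simp [klR])
    (fun q q' ⟨ha, hb, hab⟩ ⟨hc, hd, hcd⟩ => klR_add_le ha hb hc hd hab hcd) hp_add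
    (fun i => (r i, h i)) (fun i hi => ⟨hr i hi, hh i hi, hrh i hi⟩)
  simpa only [Prod.fst_sum, Prod.snd_sum] using this

lemma neg_two_mul_log_mul_add_klR_add_klR (a b c : ℝ) (ha : 0 ≤ a) (hb : 0 ≤ b) (hc : 0 ≤ c) :
    -2 * Real.log c * (√(a * b) * c) + klR (√(a * b) * c) a + klR (√(a * b) * c) b =
      a + b - 2 * √(a * b) * c := by
  rcases hc.eq_or_lt with rfl | hc
  · simp
  rcases ha.eq_or_lt with rfl | ha
  · simp
  rcases hb.eq_or_lt with rfl | hb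
  · simp
  set r := √(a * b) * c
  have hr : 0 < r := by positivity
  have hlog : Real.log (r / a) + Real.log (r / b) = 2 * Real.log c := by
    have hsq : (r / a) * (r / b) = c ^ 2 := by
      simp only [r]
      field_simp
      rw [Real.sq_sqrt (by positivity)]
    rw [← Real.log_mul (by positivity) (by positivity), hsq, Real.log_pow, Nat.cast_ofNat]
  have : r * Real.log (r / a) + r * Real.log (r / b) = 2 * Real.log c * r := by
    rw [← mul_add, hlog, mul_comm]
  simp only [klR]
  linarith

@[norm_cast]
lemma EReal.coe_finset_sum {ι : Type*} (s : Finset ι) (f : ι → ℝ) :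
    ((∑ i ∈ s, f i : ℝ) : EReal) = ∑ i ∈ s, (f i : EReal) :=
  map_sum (⟨⟨Real.toEReal, EReal.coe_zero⟩, EReal.coe_add⟩ : ℝ →+ EReal) f s

/-- `⊤ * 0 = 0` in `EReal`, so a plan vanishing where the cost is infinite pays a real cost. -/
lemma wfrCost_mul_coe {n : ℕ} (η : ℝ) (x y : EuclideanSpace ℝ (Fin n)) {r : ℝ}
    (hr : cosPlus (‖x - y‖ / (2 * η)) = 0 → r = 0) :
    wfrCost η x y * (r : EReal) =
      ((-2 * Real.log (cosPlus (‖x - y‖ / (2 * η))) * r : ℝ) : EReal) := by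
  unfold wfrCost
  split_ifs with h
  · simp [hr h]
  · norm_cast

lemma wfrSq_le_of_plan {n I J : ℕ} (η : ℝ) (μ : Fin I → ℝ)
    (x : Fin I → EuclideanSpace ℝ (Fin n)) (ν : Fin J → ℝ) (y : Fin J → EuclideanSpace ℝ (Fin n))
    (R : Fin I → Fin J → ℝ)
    (hR : ∀ i j, 0 ≤ R i j) (hRsupp : ∀ i j, cosPlus (‖x i - y j‖ / (2 * η)) = 0 → R i j = 0) :
    wfrSq η μ x ν y ≤ ((2 * η ^ 2 *
      (∑ i, ∑ j, -2 * Real.log (cosPlus (‖x i - y j‖ / (2 * η))) * R i j +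
        (∑ i, klR (∑ j, R i j) (μ i) + ∑ j, klR (∑ i, R i j) (ν j))) : ℝ) : EReal) := by
  rw [EReal.coe_mul]
  refine mul_le_mul_of_nonneg_left (sInf_le ⟨R, hR, ?_⟩) (EReal.coe_nonneg.2 (by positivity))
  simp only [EReal.coe_add, EReal.coe_finset_sum, wfrCost_mul_coe η _ _ (hRsupp _ _)]

theorem wfr_semicoupling_upper_bound_general {n I J : ℕ} (η : ℝ)
    (μ : Fin I → ℝ) (x : Fin I → EuclideanSpace ℝ (Fin n))
    (ν : Fin J → ℝ) (y : Fin J → EuclideanSpace ℝ (Fin n))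
    (α : Fin I → Fin J → ℝ) (β : Fin J → Fin I → ℝ)
    (hα : ∀ i j, 0 ≤ α i j) (hβ : ∀ j i, 0 ≤ β j i)
    (hαsum : ∀ i, ∑ j, α i j = μ i) (hβsum : ∀ j, ∑ i, β j i = ν j) :
    wfrSq η μ x ν y ≤
      ((∑ i, ∑ j, wfrDiracSq η (α i j) (β j i) (x i) (y j) : ℝ) : EReal) := by
  set R : Fin I → Fin J → ℝ := fun i j => √(α i j * β j i) * cosPlus (‖x i - y j‖ / (2 * η))
  have hR : ∀ i j, 0 ≤ R i j := fun i j => mul_nonneg (Real.sqrt_nonneg _) (cosPlus_nonneg _)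
  have hμ : ∀ i, klR (∑ j, R i j) (μ i) ≤ ∑ j, klR (R i j) (α i j) := fun i =>
    hαsum i ▸ klR_sum_le _ (fun j _ => hR i j) (fun j _ => hα i j) (fun j _ h => by simp [R, h])
  have hν : ∀ j, klR (∑ i, R i j) (ν j) ≤ ∑ i, klR (R i j) (β j i) := fun j =>
    hβsum j ▸ klR_sum_le _ (fun i _ => hR i j) (fun i _ => hβ j i) (fun i _ h => by simp [R, h])
  have hKL : ∑ i, klR (∑ j, R i j) (μ i) + ∑ j, klR (∑ i, R i j) (ν j) ≤
      ∑ i, ∑ j, klR (R i j) (α i j) + ∑ i, ∑ j, klR (R i j) (β j i) :=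
    add_le_add (sum_le_sum fun i _ => hμ i) ((sum_le_sum fun j _ => hν j).trans_eq sum_comm)
  refine (wfrSq_le_of_plan η μ x ν y R hR fun i j h => by simp [R, h]).trans ?_
  rw [EReal.coe_le_coe_iff]
  calc _ ≤ 2 * η ^ 2 * ∑ i, ∑ j, (-2 * Real.log (cosPlus (‖x i - y j‖ / (2 * η))) * R i j +
          klR (R i j) (α i j) + klR (R i j) (β j i)) := by
        gcongr
        simp only [sum_add_distrib]
        linarith
    _ = ∑ i, ∑ j, wfrDiracSq η (α i j) (β j i) (x i) (y j) := by
        simp only [R, mul_sum, wfrDiracSq,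
          neg_two_mul_log_mul_add_klR_add_klR _ _ _ (hα _ _) (hβ _ _) (cosPlus_nonneg _)]

theorem wfr_semicoupling_upper_bound {n I J : ℕ} (η : ℝ) (hη : 0 < η)
    (μ : Fin I → ℝ) (x : Fin I → EuclideanSpace ℝ (Fin n))
    (ν : Fin J → ℝ) (y : Fin J → EuclideanSpace ℝ (Fin n))
    (hμ : ∀ i, 0 < μ i) (hν : ∀ j, 0 < ν j)
    (α : Fin I → Fin J → ℝ) (β : Fin J → Fin I → ℝ)
    (hα : ∀ i j, 0 ≤ α i j) (hβ : ∀ j i, 0 ≤ β j i)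
    (hαsum : ∀ i, ∑ j, α i j = μ i) (hβsum : ∀ j, ∑ i, β j i = ν j) :
    wfrSq η μ x ν y ≤
      ((∑ i, ∑ j, wfrDiracSq η (α i j) (β j i) (x i) (y j) : ℝ) : EReal) :=
  wfr_semicoupling_upper_bound_general η μ x ν y α β hα hβ hαsum hβsum
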